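/- arXiv:2312.14905 — 2 statements merged into one kernel-verified Lean document; each statement's English description precedes it below -/
import Mathlib

section
/- Square relation for unlinking (Proposition 3.1, relation (3.1a)): Let (C,x) be a quiver pair with m nodes and let i, j, k, l be four pairwise distinct nodes. Let A = U(k,l)(U(i,j)(C,x)) and B = U(i,j)(U(k,l)(C,x)), both quiver pairs with m+2 nodes, and let τ be the transposition of {1,…,m+2} exchanging m+1 and m+2. Then A and B coincide after relabeling by τ, i.e. A's matrix at (a,b) equals B's matrix at (τ(a),τ(b)) and A's variable at a equals B's variable at τ(a), for all a,b. -/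
namespace QuiverUnlink

/-- Unlinking of the distinct nodes `i` and `j`: the matrix part.
Nodes are indexed `0, …, m-1`; the newly created node has index `m`. -/
def unlinkC {m : ℕ} (C : Fin m → Fin m → ℤ) (i j : Fin m) :
    Fin (m + 1) → Fin (m + 1) → ℤ := fun a b =>
  if ha : (a : ℕ) < m then
    if hb : (b : ℕ) < m then
      if ((⟨a, ha⟩ : Fin m) = i ∧ (⟨b, hb⟩ : Fin m) = j) ∨
         ((⟨a, ha⟩ : Fin m) = j ∧ (⟨b, hb⟩ : Fin m) = i) then
        C i j - 1
      else C ⟨a, ha⟩ ⟨b, hb⟩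
    else
      if (⟨a, ha⟩ : Fin m) = i then C i i + C i j - 1
      else if (⟨a, ha⟩ : Fin m) = j then C j j + C i j - 1
      else C ⟨a, ha⟩ i + C ⟨a, ha⟩ j
  else
    if hb : (b : ℕ) < m then
      if (⟨b, hb⟩ : Fin m) = i then C i i + C i j - 1
      else if (⟨b, hb⟩ : Fin m) = j then C j j + C i j - 1
      else C ⟨b, hb⟩ i + C ⟨b, hb⟩ j
    else C i i + C j j + 2 * C i j - 1

/-- Unlinking of the distinct nodes `i` and `j`: the generating-parameters part. -/
def unlinkX {G : Type*} [CommGroup G] {m : ℕ} (q : G) (x : Fin m → G) (i j : Fin m) :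
    Fin (m + 1) → G := fun a =>
  if ha : (a : ℕ) < m then x ⟨a, ha⟩ else q⁻¹ * x i * x j

set_option maxHeartbeats 1600000 in
/-- **Square relation for unlinking** (Proposition 3.1, relation (3.1a)). -/
theorem square_relation {G : Type*} [CommGroup G] (q : G) {m : ℕ}
    (C : Fin m → Fin m → ℤ) (hC : ∀ a b, C a b = C b a) (x : Fin m → G)
    (i j k l : Fin m) (hij : i ≠ j) (hik : i ≠ k) (hil : i ≠ l)
    (hjk : j ≠ k) (hjl : j ≠ l) (hkl : k ≠ l) :
    let A : Fin (m + 2) → Fin (m + 2) → ℤ :=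
      unlinkC (unlinkC C i j) k.castSucc l.castSucc
    let Ax : Fin (m + 2) → G := unlinkX q (unlinkX q x i j) k.castSucc l.castSucc
    let B : Fin (m + 2) → Fin (m + 2) → ℤ :=
      unlinkC (unlinkC C k l) i.castSucc j.castSucc
    let Bx : Fin (m + 2) → G := unlinkX q (unlinkX q x k l) i.castSucc j.castSucc
    let τ : Equiv.Perm (Fin (m + 2)) :=
      Equiv.swap ⟨m, by omega⟩ ⟨m + 1, by omega⟩
    (∀ a b, A a b = B (τ a) (τ b)) ∧ (∀ a, Ax a = Bx (τ a)) := by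
  intro A Ax B Bx τ
  have hτlt : ∀ (n : ℕ) (h : n < m + 2), n < m → τ ⟨n, h⟩ = ⟨n, h⟩ := by
    intro n h h2
    exact Equiv.swap_apply_of_ne_of_ne (Fin.ne_of_val_ne (by simpa using by omega))
      (Fin.ne_of_val_ne (by simpa using by omega))
  have hτm : ∀ (h : m < m + 2), τ ⟨m, h⟩ = ⟨m + 1, by omega⟩ := fun h =>
    Equiv.swap_apply_left _ _
  have hτm1 : ∀ (h : m + 1 < m + 2), τ ⟨m + 1, h⟩ = ⟨m, by omega⟩ := fun h =>
    Equiv.swap_apply_right _ _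
  have hik' : (i : ℕ) ≠ k := Fin.val_ne_of_ne hik
  have hil' : (i : ℕ) ≠ l := Fin.val_ne_of_ne hil
  have hjk' : (j : ℕ) ≠ k := Fin.val_ne_of_ne hjk
  have hjl' : (j : ℕ) ≠ l := Fin.val_ne_of_ne hjl
  have hij' : (i : ℕ) ≠ j := Fin.val_ne_of_ne hij
  have hkl' : (k : ℕ) ≠ l := Fin.val_ne_of_ne hkl
  have hki' : (k : ℕ) ≠ i := fun h => hik' h.symm
  have hli' : (l : ℕ) ≠ i := fun h => hil' h.symm
  have hkj' : (k : ℕ) ≠ j := fun h => hjk' h.symm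
  have hlj' : (l : ℕ) ≠ j := fun h => hjl' h.symm
  have hji' : (j : ℕ) ≠ i := fun h => hij' h.symm
  have hlk' : (l : ℕ) ≠ k := fun h => hkl' h.symm
  have fm1 : ∀ c : Fin m, (c : ℕ) < m + 1 := fun c => by omega
  have gm : ∀ c : Fin m, (c : ℕ) ≠ m := fun c => by omega
  have gm1 : ∀ c : Fin m, (c : ℕ) ≠ m + 1 := fun c => by omega
  have gm' : ∀ c : Fin m, m ≠ (c : ℕ) := fun c => by omega
  have gm1' : ∀ c : Fin m, m + 1 ≠ (c : ℕ) := fun c => by omega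
  have n1 : m < m + 1 := by omega
  have n2 : ¬ (m < m) := by omega
  have n3 : ¬ (m + 1 < m) := by omega
  have n4 : ¬ (m + 1 < m + 1) := by omega
  have n5 : ¬ (m + 1 = m) := by omega
  have n6 : ¬ (m = m + 1) := by omega
  constructor
  · rintro ⟨a, ha⟩ ⟨b, hb⟩
    have Ha : a < m ∨ a = m ∨ a = m + 1 := by omega
    have Hb : b < m ∨ b = m ∨ b = m + 1 := by omega
    rcases Ha with hlt | heq | heq <;> rcases Hb with hlt' | heq' | heq'
    · have e1 : a < m + 1 := by omega
      have e2 : b < m + 1 := by omega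
      rw [hτlt _ ha hlt, hτlt _ hb hlt']
      simp only [A, B, unlinkC, Fin.ext_iff, Fin.coe_castSucc, Fin.eta, Fin.is_lt,
        fm1, gm, gm1, gm', gm1', n1, n2, n3, n4, n5, n6,
        hik', hil', hjk', hjl', hij', hkl', hki', hli', hkj', hlj', hji', hlk',
        dite_true, if_true, false_and, and_false, false_or, or_false, if_false,
        dite_eq_ite, e1, hlt, e2, hlt']
      split_ifs <;>
        first
          | rfl
          | omega
          | contradiction
          | linarith [hC i k, hC i l, hC j k, hC j l, hC k i, hC k j, hC l i, hC l j,
              hC i j, hC k l]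
    · have hb2 : (⟨b, hb⟩ : Fin (m + 2)) = ⟨m, by omega⟩ := Fin.ext heq'
      have e1 : a < m + 1 := by omega
      rw [hτlt _ ha hlt, hb2, hτm]
      simp only [A, B, unlinkC, Fin.ext_iff, Fin.coe_castSucc, Fin.eta, Fin.is_lt,
        fm1, gm, gm1, gm', gm1', n1, n2, n3, n4, n5, n6,
        hik', hil', hjk', hjl', hij', hkl', hki', hli', hkj', hlj', hji', hlk',
        dite_true, if_true, false_and, and_false, false_or, or_false, if_false,
        dite_eq_ite, e1, hlt]
      split_ifs <;>
        first
          | rfl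
          | omega
          | contradiction
          | linarith [hC i k, hC i l, hC j k, hC j l, hC k i, hC k j, hC l i, hC l j,
              hC i j, hC k l]
    · have hb2 : (⟨b, hb⟩ : Fin (m + 2)) = ⟨m + 1, by omega⟩ := Fin.ext heq'
      have e1 : a < m + 1 := by omega
      rw [hτlt _ ha hlt, hb2, hτm1]
      simp only [A, B, unlinkC, Fin.ext_iff, Fin.coe_castSucc, Fin.eta, Fin.is_lt,
        fm1, gm, gm1, gm', gm1', n1, n2, n3, n4, n5, n6,
        hik', hil', hjk', hjl', hij', hkl', hki', hli', hkj', hlj', hji', hlk',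
        dite_true, if_true, false_and, and_false, false_or, or_false, if_false,
        dite_eq_ite, e1, hlt]
      split_ifs <;>
        first
          | rfl
          | omega
          | contradiction
          | linarith [hC i k, hC i l, hC j k, hC j l, hC k i, hC k j, hC l i, hC l j,
              hC i j, hC k l]
    · have ha2 : (⟨a, ha⟩ : Fin (m + 2)) = ⟨m, by omega⟩ := Fin.ext heq
      have e2 : b < m + 1 := by omega
      rw [ha2, hτm, hτlt _ hb hlt']
      simp only [A, B, unlinkC, Fin.ext_iff, Fin.coe_castSucc, Fin.eta, Fin.is_lt,
        fm1, gm, gm1, gm', gm1', n1, n2, n3, n4, n5, n6,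
        hik', hil', hjk', hjl', hij', hkl', hki', hli', hkj', hlj', hji', hlk',
        dite_true, if_true, false_and, and_false, false_or, or_false, if_false,
        dite_eq_ite, e2, hlt']
      split_ifs <;>
        first
          | rfl
          | omega
          | contradiction
          | linarith [hC i k, hC i l, hC j k, hC j l, hC k i, hC k j, hC l i, hC l j,
              hC i j, hC k l]
    · have ha2 : (⟨a, ha⟩ : Fin (m + 2)) = ⟨m, by omega⟩ := Fin.ext heq
      have hb2 : (⟨b, hb⟩ : Fin (m + 2)) = ⟨m, by omega⟩ := Fin.ext heq'
      rw [ha2, hτm, hb2, hτm]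
      simp only [A, B, unlinkC, Fin.ext_iff, Fin.coe_castSucc, Fin.eta, Fin.is_lt,
        fm1, gm, gm1, gm', gm1', n1, n2, n3, n4, n5, n6,
        hik', hil', hjk', hjl', hij', hkl', hki', hli', hkj', hlj', hji', hlk',
        dite_true, if_true, false_and, and_false, false_or, or_false, if_false,
        dite_eq_ite]
      split_ifs <;>
        first
          | rfl
          | omega
          | contradiction
          | linarith [hC i k, hC i l, hC j k, hC j l, hC k i, hC k j, hC l i, hC l j,
              hC i j, hC k l]
    · have ha2 : (⟨a, ha⟩ : Fin (m + 2)) = ⟨m, by omega⟩ := Fin.ext heq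
      have hb2 : (⟨b, hb⟩ : Fin (m + 2)) = ⟨m + 1, by omega⟩ := Fin.ext heq'
      rw [ha2, hτm, hb2, hτm1]
      simp only [A, B, unlinkC, Fin.ext_iff, Fin.coe_castSucc, Fin.eta, Fin.is_lt,
        fm1, gm, gm1, gm', gm1', n1, n2, n3, n4, n5, n6,
        hik', hil', hjk', hjl', hij', hkl', hki', hli', hkj', hlj', hji', hlk',
        dite_true, if_true, false_and, and_false, false_or, or_false, if_false,
        dite_eq_ite]
      split_ifs <;>
        first
          | rfl
          | omega
          | contradiction
          | linarith [hC i k, hC i l, hC j k, hC j l, hC k i, hC k j, hC l i, hC l j,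
              hC i j, hC k l]
    · have ha2 : (⟨a, ha⟩ : Fin (m + 2)) = ⟨m + 1, by omega⟩ := Fin.ext heq
      have e2 : b < m + 1 := by omega
      rw [ha2, hτm1, hτlt _ hb hlt']
      simp only [A, B, unlinkC, Fin.ext_iff, Fin.coe_castSucc, Fin.eta, Fin.is_lt,
        fm1, gm, gm1, gm', gm1', n1, n2, n3, n4, n5, n6,
        hik', hil', hjk', hjl', hij', hkl', hki', hli', hkj', hlj', hji', hlk',
        dite_true, if_true, false_and, and_false, false_or, or_false, if_false,
        dite_eq_ite, e2, hlt']
      split_ifs <;>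
        first
          | rfl
          | omega
          | contradiction
          | linarith [hC i k, hC i l, hC j k, hC j l, hC k i, hC k j, hC l i, hC l j,
              hC i j, hC k l]
    · have ha2 : (⟨a, ha⟩ : Fin (m + 2)) = ⟨m + 1, by omega⟩ := Fin.ext heq
      have hb2 : (⟨b, hb⟩ : Fin (m + 2)) = ⟨m, by omega⟩ := Fin.ext heq'
      rw [ha2, hτm1, hb2, hτm]
      simp only [A, B, unlinkC, Fin.ext_iff, Fin.coe_castSucc, Fin.eta, Fin.is_lt,
        fm1, gm, gm1, gm', gm1', n1, n2, n3, n4, n5, n6,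
        hik', hil', hjk', hjl', hij', hkl', hki', hli', hkj', hlj', hji', hlk',
        dite_true, if_true, false_and, and_false, false_or, or_false, if_false,
        dite_eq_ite]
      split_ifs <;>
        first
          | rfl
          | omega
          | contradiction
          | linarith [hC i k, hC i l, hC j k, hC j l, hC k i, hC k j, hC l i, hC l j,
              hC i j, hC k l]
    · have ha2 : (⟨a, ha⟩ : Fin (m + 2)) = ⟨m + 1, by omega⟩ := Fin.ext heq
      have hb2 : (⟨b, hb⟩ : Fin (m + 2)) = ⟨m + 1, by omega⟩ := Fin.ext heq'
      rw [ha2, hτm1, hb2, hτm1]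
      simp only [A, B, unlinkC, Fin.ext_iff, Fin.coe_castSucc, Fin.eta, Fin.is_lt,
        fm1, gm, gm1, gm', gm1', n1, n2, n3, n4, n5, n6,
        hik', hil', hjk', hjl', hij', hkl', hki', hli', hkj', hlj', hji', hlk',
        dite_true, if_true, false_and, and_false, false_or, or_false, if_false,
        dite_eq_ite]
      split_ifs <;>
        first
          | rfl
          | omega
          | contradiction
          | linarith [hC i k, hC i l, hC j k, hC j l, hC k i, hC k j, hC l i, hC l j,
              hC i j, hC k l]
  · rintro ⟨a, ha⟩
    have Ha : a < m ∨ a = m ∨ a = m + 1 := by omega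
    rcases Ha with hlt | heq | heq
    · rw [hτlt _ ha hlt]
      have e1 : a < m + 1 := by omega
      simp only [Ax, Bx, unlinkX, Fin.eta, Fin.is_lt, Fin.coe_castSucc, fm1, e1, hlt, n1, n2, n3, n4,
        dite_true, if_true, dite_eq_ite]
    · have ha2 : (⟨a, ha⟩ : Fin (m + 2)) = ⟨m, by omega⟩ := Fin.ext heq
      rw [ha2, hτm]
      simp only [Ax, Bx, unlinkX, Fin.eta, Fin.is_lt, Fin.coe_castSucc, fm1, n1, n2, n3, n4,
        dite_true, if_true, dite_eq_ite]
      split_ifs <;> first | rfl | omega | contradiction | group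
    · have ha2 : (⟨a, ha⟩ : Fin (m + 2)) = ⟨m + 1, by omega⟩ := Fin.ext heq
      rw [ha2, hτm1]
      simp only [Ax, Bx, unlinkX, Fin.eta, Fin.is_lt, Fin.coe_castSucc, fm1, n1, n2, n3, n4,
        dite_true, if_true, dite_eq_ite]
      split_ifs <;> first | rfl | omega | contradiction | group

end QuiverUnlink
end

section
/- Splitting by unlinking (Proposition 6.1): Fix the splitting data Č, x̌, s, n, k, l, h_1,…,h_s, κ. Let Č′ be the symmetric (s+n+1)×(s+n+1) integer matrix extending Č by a last node ι = s+n+1 with Č′(u,ι) = h_u for u ≤ s, Č′(s+i,ι) = k+1 for 1 ≤ i ≤ n, and Č′(ι,ι) = l−2k−1, and extend x̌ by x̌′(ι) = q·κ. Fix an enumeration a_1,…,a_n of {1,…,n} and let σ be the permutation of {1,…,n} with σ(a_t) = t for all t. Let (D,y) be the quiver pair with s+2n+1 nodes obtained by applying to (Č′,x̌′) the unlinkings U(s+a_1, ι), then U(s+a_2, ι), …, then U(s+a_n, ι) (the node created at step t has index s+n+1+t). Let π be the bijection of node sets that keeps nodes 1,…,s+n at the positions of 1,…,s and s+1,…,s+n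 in the ordering 1,…,s, s+1, (s+1)′, …, s+n, (s+n)′, ι; sends the node created at step t to the position of (s+a_t)′; and sends ι = s+n+1 to the last position. Then (D,y) coincides after relabeling by π with the quiver pair given by the (k,l)-split quiver pair (C_σ, x_σ) augmented by a last node ι whose entries are: h_u toward each spectator u ≤ s, k toward each split node s+i, l−k−1 toward each copy (s+i)′, diagonal entry l−2k−1, and variable q·κ. -/
/-!
Unlinking `s + e t` from `ι` creates a node that plays the role of the copy `(s + e t)'` and
lowers the entry between `s + e t` and `ι` from `k + 1` to `k`. Hence after `t` unlinkings the
quiver is already the relabeled target, except that every split node `s + j` not yet unlinked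
(`t ≤ σ j`) still has entry `k + 1` towards `ι`. Each step preserves this invariant: the new
column is `C(a, s + e t) + C(a, ι)`, and since the copies appear in the order given by `σ`, a
split node and a copy end up differing by `k` or by `k + 1` exactly as `σ` prescribes.
-/

namespace QuiverUnlink

universe u

/-- A quiver pair: a symmetric integer matrix together with generating parameters in `G`,
on `m` nodes (indexed `0, …, m-1`). -/
structure QP (G : Type u) where
  m : ℕ
  C : Fin m → Fin m → ℤ
  x : Fin m → G

/-- Matrix entry of a quiver pair, read at natural-number indices (junk value `0` out of range). -/
def QP.Cn {G : Type u} (Q : QP G) (a b : ℕ) : ℤ :=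
  if ha : a < Q.m then if hb : b < Q.m then Q.C ⟨a, ha⟩ ⟨b, hb⟩ else 0 else 0

/-- Generating parameter of a quiver pair, read at a natural-number index
(junk value `1` out of range). -/
def QP.xn {G : Type u} [CommGroup G] (Q : QP G) (a : ℕ) : G :=
  if h : a < Q.m then Q.x ⟨a, h⟩ else 1

/-- One unlinking step `U(i,j)`, with nodes given by natural-number indices.
If the indices are not valid the quiver pair is returned unchanged (this case never
occurs under the validity hypotheses of the statements below). -/
def unlinkStep {G : Type u} [CommGroup G] (q : G) (i j : ℕ) (Q : QP G) : QP G :=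
  if h : i < Q.m ∧ j < Q.m ∧ i ≠ j then
    { m := Q.m + 1
      C := unlinkC Q.C ⟨i, h.1⟩ ⟨j, h.2.1⟩
      x := unlinkX q Q.x ⟨i, h.1⟩ ⟨j, h.2.1⟩ }
  else Q

/-- Apply a sequence of unlinkings, leftmost entry first. -/
def applySeq {G : Type u} [CommGroup G] (q : G) (S : List (ℕ × ℕ)) (Q : QP G) : QP G :=
  S.foldl (fun R e => unlinkStep q e.1 e.2 R) Q

/-- A sequence of unlinkings starting at `m` nodes: the entry at (0-based) position `t`
consists of two distinct node indices `< m + t` (the node created at step `t` has index `m + t`). -/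
def ValidSeq (m : ℕ) (S : List (ℕ × ℕ)) : Prop :=
  ∀ t : Fin S.length,
    (S.get t).1 ≠ (S.get t).2 ∧ (S.get t).1 < m + (t : ℕ) ∧ (S.get t).2 < m + (t : ℕ)

/-- Two quiver pairs are permutation-equivalent rel the first `m` nodes. -/
def PermEquivRel {G : Type u} (m : ℕ) (X Y : QP G) : Prop :=
  ∃ (h : X.m = Y.m) (π : Equiv.Perm (Fin Y.m)),
    (∀ a : Fin Y.m, (a : ℕ) < m → π a = a) ∧
    (∀ a b : Fin X.m, X.C a b = Y.C (π (Fin.cast h a)) (π (Fin.cast h b))) ∧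
    (∀ a : Fin X.m, X.x a = Y.x (π (Fin.cast h a)))

/-- Two quiver pairs are permutation-equivalent. -/
def PermEquiv {G : Type u} (X Y : QP G) : Prop :=
  ∃ (h : X.m = Y.m) (π : Equiv.Perm (Fin Y.m)),
    (∀ a b : Fin X.m, X.C a b = Y.C (π (Fin.cast h a)) (π (Fin.cast h b))) ∧
    (∀ a : Fin X.m, X.x a = Y.x (π (Fin.cast h a)))

/-- Read a `Fin m`-indexed integer matrix at natural-number indices (junk value `0`). -/
def matN {m : ℕ} (Cc : Fin m → Fin m → ℤ) (a b : ℕ) : ℤ :=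
  if ha : a < m then if hb : b < m then Cc ⟨a, ha⟩ ⟨b, hb⟩ else 0 else 0

/-- Read a `Fin s`-indexed integer vector at a natural-number index (junk value `0`). -/
def intN {s : ℕ} (h : Fin s → ℤ) (a : ℕ) : ℤ :=
  if ha : a < s then h ⟨a, ha⟩ else 0

/-- Read a `Fin m`-indexed vector of group elements at a natural-number index (junk `1`). -/
def grpN {G : Type u} [CommGroup G] {m : ℕ} (xc : Fin m → G) (a : ℕ) : G :=
  if ha : a < m then xc ⟨a, ha⟩ else 1

/-- The matrix of the `(k,l)`-split quiver pair with permutation `σ`, read at natural-number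
indices.  The `s + 2n` nodes are ordered as: spectators `0, …, s-1`, then for each
`i = 0, …, n-1` the split node `s + 2i` followed by its primed copy `s + 2i + 1`. -/
def splitCN (s n : ℕ) (k l : ℤ) (CcN : ℕ → ℕ → ℤ) (hN : ℕ → ℤ) (σ : Equiv.Perm (Fin n))
    (a b : ℕ) : ℤ :=
  if a < s then
    if b < s then CcN a b
    else CcN a (s + (b - s) / 2) + (if (b - s) % 2 = 1 then hN a else 0)
  else if b < s then
    CcN (s + (a - s) / 2) b + (if (a - s) % 2 = 1 then hN b else 0)
  else
    if (a - s) % 2 = 0 then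
      if (b - s) % 2 = 0 then CcN (s + (a - s) / 2) (s + (b - s) / 2)
      else
        if (a - s) / 2 = (b - s) / 2 then CcN (s + (a - s) / 2) (s + (b - s) / 2) + k
        else if hij : (a - s) / 2 < n ∧ (b - s) / 2 < n then
          (if σ ⟨(a - s) / 2, hij.1⟩ < σ ⟨(b - s) / 2, hij.2⟩ then
            CcN (s + (a - s) / 2) (s + (b - s) / 2) + k
          else CcN (s + (a - s) / 2) (s + (b - s) / 2) + k + 1)
        else 0
    else
      if (b - s) % 2 = 0 then
        if (a - s) / 2 = (b - s) / 2 then CcN (s + (a - s) / 2) (s + (b - s) / 2) + k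
        else if hij : (a - s) / 2 < n ∧ (b - s) / 2 < n then
          (if σ ⟨(b - s) / 2, hij.2⟩ < σ ⟨(a - s) / 2, hij.1⟩ then
            CcN (s + (a - s) / 2) (s + (b - s) / 2) + k
          else CcN (s + (a - s) / 2) (s + (b - s) / 2) + k + 1)
        else 0
      else CcN (s + (a - s) / 2) (s + (b - s) / 2) + l

/-- The generating parameters of the `(k,l)`-split quiver pair, read at natural-number
indices: spectators and split nodes keep their parameters, primed copies get the extra
multiplicative factor `κ`. -/
def splitXN {G : Type u} [CommGroup G] (s : ℕ) (xcN : ℕ → G) (κ : G) (a : ℕ) : G :=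
  if a < s then xcN a
  else if (a - s) % 2 = 0 then xcN (s + (a - s) / 2) else xcN (s + (a - s) / 2) * κ

section Unlinking

variable {G : Type u} [CommGroup G] (q : G) {i j : ℕ} {Q : QP G}

lemma unlinkStep_m (hv : i < Q.m ∧ j < Q.m ∧ i ≠ j) : (unlinkStep q i j Q).m = Q.m + 1 := by
  rw [unlinkStep, dif_pos hv]

lemma unlinkStep_Cn_of_lt (hv : i < Q.m ∧ j < Q.m ∧ i ≠ j) {a b : ℕ} (ha : a < Q.m)
    (hb : b < Q.m) :
    (unlinkStep q i j Q).Cn a b =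
      if (a = i ∧ b = j) ∨ (a = j ∧ b = i) then Q.Cn i j - 1 else Q.Cn a b := by
  rw [unlinkStep, dif_pos hv]
  simp [QP.Cn, unlinkC, hv.1, hv.2.1, ha, hb, ha.le, hb.le]

lemma unlinkStep_Cn_new (hv : i < Q.m ∧ j < Q.m ∧ i ≠ j) {a : ℕ} (ha : a < Q.m) :
    (unlinkStep q i j Q).Cn a Q.m =
      if a = i then Q.Cn i i + Q.Cn i j - 1
      else if a = j then Q.Cn j j + Q.Cn i j - 1 else Q.Cn a i + Q.Cn a j := by
  rw [unlinkStep, dif_pos hv]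
  simp [QP.Cn, unlinkC, hv.1, hv.2.1, ha, ha.le]

lemma unlinkStep_Cn_new_comm (hv : i < Q.m ∧ j < Q.m ∧ i ≠ j) {b : ℕ} (hb : b < Q.m) :
    (unlinkStep q i j Q).Cn Q.m b = (unlinkStep q i j Q).Cn b Q.m := by
  rw [unlinkStep, dif_pos hv]
  simp [QP.Cn, unlinkC, hb]

lemma unlinkStep_Cn_new_new (hv : i < Q.m ∧ j < Q.m ∧ i ≠ j) :
    (unlinkStep q i j Q).Cn Q.m Q.m = Q.Cn i i + Q.Cn j j + 2 * Q.Cn i j - 1 := by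
  rw [unlinkStep, dif_pos hv]
  simp [QP.Cn, unlinkC, hv.1, hv.2.1]

lemma unlinkStep_xn_of_lt (hv : i < Q.m ∧ j < Q.m ∧ i ≠ j) {a : ℕ} (ha : a < Q.m) :
    (unlinkStep q i j Q).xn a = Q.xn a := by
  rw [unlinkStep, dif_pos hv]
  simp [QP.xn, unlinkX, ha, ha.le]

lemma unlinkStep_xn_new (hv : i < Q.m ∧ j < Q.m ∧ i ≠ j) :
    (unlinkStep q i j Q).xn Q.m = q⁻¹ * Q.xn i * Q.xn j := by
  rw [unlinkStep, dif_pos hv]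
  simp [QP.xn, unlinkX, hv.1, hv.2.1]

lemma applySeq_append_singleton (S : List (ℕ × ℕ)) (p : ℕ × ℕ) :
    applySeq q (S ++ [p]) Q = unlinkStep q p.1 p.2 (applySeq q S Q) := by
  rw [applySeq, List.foldl_append]
  rfl

end Unlinking

lemma matN_comm {m : ℕ} {Cc : Fin m → Fin m → ℤ} (hCc : ∀ a b, Cc a b = Cc b a) (a b : ℕ) :
    matN Cc a b = matN Cc b a := by
  unfold matN
  split_ifs <;> first | rfl | exact hCc _ _

section SplitLayout

variable {s n : ℕ} {k l : ℤ} {CcN : ℕ → ℕ → ℤ} {hN : ℕ → ℤ} {σ : Equiv.Perm (Fin n)}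
  {a b i j : ℕ}

lemma splitCN_comm (hC : ∀ a b, CcN a b = CcN b a) (a b : ℕ) :
    splitCN s n k l CcN hN σ a b = splitCN s n k l CcN hN σ b a := by
  unfold splitCN
  split_ifs <;> first | omega | rw [hC]

lemma splitCN_spectator_spectator (ha : a < s) (hb : b < s) :
    splitCN s n k l CcN hN σ a b = CcN a b := by
  simp [splitCN, ha, hb]

lemma splitCN_spectator_node (ha : a < s) :
    splitCN s n k l CcN hN σ a (s + 2 * j) = CcN a (s + j) := by
  simp [splitCN, ha]

lemma splitCN_spectator_copy (ha : a < s) :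
    splitCN s n k l CcN hN σ a (s + 2 * j + 1) = CcN a (s + j) + hN a := by
  simp [splitCN, ha, Nat.add_assoc, Nat.add_mod, Nat.add_div]

lemma splitCN_node_node :
    splitCN s n k l CcN hN σ (s + 2 * i) (s + 2 * j) = CcN (s + i) (s + j) := by
  simp [splitCN]

lemma splitCN_node_copy_self :
    splitCN s n k l CcN hN σ (s + 2 * i) (s + 2 * i + 1) = CcN (s + i) (s + i) + k := by
  simp [splitCN, Nat.add_assoc, Nat.add_mod, Nat.add_div]

lemma splitCN_node_copy (hi : i < n) (hj : j < n) (hij : i ≠ j) :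
    splitCN s n k l CcN hN σ (s + 2 * i) (s + 2 * j + 1) =
      CcN (s + i) (s + j) + if σ ⟨i, hi⟩ < σ ⟨j, hj⟩ then k else k + 1 := by
  have hdiv : (2 * j + 1) / 2 = j := by omega
  simp [splitCN, Nat.add_assoc, hdiv, hi, hj, hij]
  split_ifs <;> ring

lemma splitCN_copy_copy :
    splitCN s n k l CcN hN σ (s + 2 * i + 1) (s + 2 * j + 1) = CcN (s + i) (s + j) + l := by
  simp [splitCN, Nat.add_assoc, Nat.add_mod, Nat.add_div]

end SplitLayout

def splitLastCol (s : ℕ) (k l : ℤ) (hN : ℕ → ℤ) (a : ℕ) : ℤ :=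
  if a < s then hN a else if (a - s) % 2 = 0 then k else l - k - 1

def augSplitC (s n : ℕ) (k l : ℤ) (CcN : ℕ → ℕ → ℤ) (hN : ℕ → ℤ) (σ : Equiv.Perm (Fin n))
    (a b : ℕ) : ℤ :=
  if a < s + 2 * n then
    if b < s + 2 * n then splitCN s n k l CcN hN σ a b else splitLastCol s k l hN a
  else if b < s + 2 * n then splitLastCol s k l hN b
  else l - 2 * k - 1

def augSplitX {G : Type u} [CommGroup G] (q : G) (s n : ℕ) (xcN : ℕ → G) (κ : G) (a : ℕ) : G :=
  if a < s + 2 * n then splitXN s xcN κ a else q * κ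

section AugSplit

variable {s n : ℕ} {k l : ℤ} {CcN : ℕ → ℕ → ℤ} {hN : ℕ → ℤ} {σ : Equiv.Perm (Fin n)}
  {a b i : ℕ}

lemma augSplitC_comm (hC : ∀ a b, CcN a b = CcN b a) (a b : ℕ) :
    augSplitC s n k l CcN hN σ a b = augSplitC s n k l CcN hN σ b a := by
  unfold augSplitC
  split_ifs <;> first | rfl | rw [splitCN_comm hC]

lemma augSplitC_of_lt (ha : a < s + 2 * n) (hb : b < s + 2 * n) :
    augSplitC s n k l CcN hN σ a b = splitCN s n k l CcN hN σ a b := by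
  simp [augSplitC, ha, hb]

lemma augSplitC_spectator_last (ha : a < s) :
    augSplitC s n k l CcN hN σ a (s + 2 * n) = hN a := by
  simp [augSplitC, splitLastCol, ha, ha.trans_le (Nat.le_add_right s (2 * n))]

lemma augSplitC_node_last (hi : i < n) :
    augSplitC s n k l CcN hN σ (s + 2 * i) (s + 2 * n) = k := by
  simp [augSplitC, splitLastCol, hi]

lemma augSplitC_copy_last (hi : i < n) :
    augSplitC s n k l CcN hN σ (s + 2 * i + 1) (s + 2 * n) = l - k - 1 := by
  simp [augSplitC, splitLastCol, Nat.add_assoc, Nat.add_mod]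
  omega

lemma augSplitC_last_last :
    augSplitC s n k l CcN hN σ (s + 2 * n) (s + 2 * n) = l - 2 * k - 1 := by
  simp [augSplitC]

end AugSplit

def natPerm {n : ℕ} (e : Equiv.Perm (Fin n)) : Equiv.Perm ℕ :=
  e.extendDomain Fin.equivSubtype

section NatPerm

variable {n r : ℕ} (e : Equiv.Perm (Fin n))

lemma natPerm_of_lt (hr : r < n) : natPerm e r = e ⟨r, hr⟩ := by
  rw [natPerm, Equiv.Perm.extendDomain_apply_subtype _ _ (p := (· < n)) hr]
  rfl

lemma natPerm_lt (hr : r < n) : natPerm e r < n := by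
  rw [natPerm_of_lt e hr]
  exact Fin.isLt _

lemma natPerm_symm : (natPerm e).symm = natPerm e.symm :=
  Equiv.Perm.extendDomain_symm _ _

lemma natPerm_symm_of_lt (hr : r < n) : (natPerm e).symm r = e.symm ⟨r, hr⟩ := by
  rw [natPerm_symm, natPerm_of_lt _ hr]

end NatPerm

/-- The relabeling `π`: after the `n` unlinkings, node `a` sits at position `splitPos s n e a`
of the augmented split quiver. -/
def splitPos (s n : ℕ) (e : Equiv.Perm (Fin n)) (a : ℕ) : ℕ :=
  if a < s then a
  else if a < s + n then s + 2 * (a - s)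
  else if a = s + n then s + 2 * n
  else if ht : a - (s + n + 1) < n then
    s + 2 * ((e ⟨a - (s + n + 1), ht⟩ : Fin n) : ℕ) + 1
  else a

section SplitPos

variable {s n : ℕ} {e : Equiv.Perm (Fin n)} {a j r : ℕ}

lemma splitPos_spectator (ha : a < s) : splitPos s n e a = a := by
  simp [splitPos, ha]

lemma splitPos_node (hj : j < n) : splitPos s n e (s + j) = s + 2 * j := by
  simp [splitPos, hj]

lemma splitPos_iota : splitPos s n e (s + n) = s + 2 * n := by
  simp [splitPos]

lemma splitPos_copy (hr : r < n) :
    splitPos s n e (s + n + 1 + r) = s + 2 * natPerm e r + 1 := by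
  rw [splitPos, if_neg (by omega), if_neg (by omega), if_neg (by omega),
    dif_pos (by omega), natPerm_of_lt e hr]
  simp

end SplitPos

lemma node_cases {s n t a : ℕ} (ha : a < s + n + 1 + t) :
    a < s ∨ (∃ j < n, a = s + j) ∨ a = s + n ∨ ∃ r < t, a = s + n + 1 + r := by
  by_cases h1 : a < s
  · exact Or.inl h1
  by_cases h2 : a < s + n
  · exact Or.inr (Or.inl ⟨a - s, by omega, by omega⟩)
  by_cases h3 : a = s + n
  · exact Or.inr (Or.inr (Or.inl h3))
  · exact Or.inr (Or.inr (Or.inr ⟨a - (s + n + 1), by omega, by omega⟩))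

/-- The target matrix in the numbering of the unlinkings: node `s + n + 1 + r`, created at
step `r`, is the copy of the split node `s + e r`. -/
def targetC (s n : ℕ) (k l : ℤ) (CcN : ℕ → ℕ → ℤ) (hN : ℕ → ℤ) (e : Equiv.Perm (Fin n))
    (a b : ℕ) : ℤ :=
  augSplitC s n k l CcN hN e.symm (splitPos s n e a) (splitPos s n e b)

def targetX {G : Type u} [CommGroup G] (q : G) (s n : ℕ) (xcN : ℕ → G) (κ : G)
    (e : Equiv.Perm (Fin n)) (a : ℕ) : G :=
  augSplitX q s n xcN κ (splitPos s n e a)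

section Target

variable {s n : ℕ} {k l : ℤ} {CcN : ℕ → ℕ → ℤ} {hN : ℕ → ℤ}
  {e : Equiv.Perm (Fin n)} {u v i j r r' : ℕ}

lemma targetC_comm (hC : ∀ a b, CcN a b = CcN b a) (a b : ℕ) :
    targetC s n k l CcN hN e a b = targetC s n k l CcN hN e b a :=
  augSplitC_comm hC _ _

lemma targetC_spectator_spectator (hu : u < s) (hv : v < s) :
    targetC s n k l CcN hN e u v = CcN u v := by
  rw [targetC, splitPos_spectator hu, splitPos_spectator hv,
    augSplitC_of_lt (by omega) (by omega), splitCN_spectator_spectator hu hv]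

lemma targetC_spectator_node (hu : u < s) (hj : j < n) :
    targetC s n k l CcN hN e u (s + j) = CcN u (s + j) := by
  rw [targetC, splitPos_spectator hu, splitPos_node hj,
    augSplitC_of_lt (by omega) (by omega), splitCN_spectator_node hu]

lemma targetC_spectator_iota (hu : u < s) : targetC s n k l CcN hN e u (s + n) = hN u := by
  rw [targetC, splitPos_spectator hu, splitPos_iota, augSplitC_spectator_last hu]

lemma targetC_spectator_copy (hu : u < s) (hr : r < n) :
    targetC s n k l CcN hN e u (s + n + 1 + r) = CcN u (s + natPerm e r) + hN u := by
  have := natPerm_lt e hr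
  rw [targetC, splitPos_spectator hu, splitPos_copy hr,
    augSplitC_of_lt (by omega) (by omega), splitCN_spectator_copy hu]

lemma targetC_node_node (hi : i < n) (hj : j < n) :
    targetC s n k l CcN hN e (s + i) (s + j) = CcN (s + i) (s + j) := by
  rw [targetC, splitPos_node hi, splitPos_node hj,
    augSplitC_of_lt (by omega) (by omega), splitCN_node_node]

lemma targetC_node_iota (hi : i < n) : targetC s n k l CcN hN e (s + i) (s + n) = k := by
  rw [targetC, splitPos_node hi, splitPos_iota, augSplitC_node_last hi]

/-- With `σ i = r` this is the entry `Č(s+i, s+i) + k` between `s + i` and its own copy. -/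
lemma targetC_node_copy (hi : i < n) (hr : r < n) :
    targetC s n k l CcN hN e (s + i) (s + n + 1 + r) =
      CcN (s + i) (s + natPerm e r) + if (natPerm e).symm i ≤ r then k else k + 1 := by
  have hj := natPerm_lt e hr
  rw [targetC, splitPos_node hi, splitPos_copy hr, augSplitC_of_lt (by omega) (by omega)]
  by_cases hij : i = natPerm e r
  · subst hij
    rw [splitCN_node_copy_self, Equiv.symm_apply_apply, if_pos le_rfl]
  · have hne : (natPerm e).symm i ≠ r := fun h => hij (by rw [← h, Equiv.apply_symm_apply])
    have hσ : e.symm ⟨i, hi⟩ < e.symm ⟨natPerm e r, hj⟩ ↔ (natPerm e).symm i ≤ r := by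
      rw [Fin.lt_def, ← natPerm_symm_of_lt e hi, ← natPerm_symm_of_lt e hj,
        Equiv.symm_apply_apply]
      omega
    simp only [splitCN_node_copy hi hj hij, hσ]

lemma targetC_iota_iota : targetC s n k l CcN hN e (s + n) (s + n) = l - 2 * k - 1 := by
  rw [targetC, splitPos_iota, augSplitC_last_last]

lemma targetC_copy_iota (hr : r < n) :
    targetC s n k l CcN hN e (s + n + 1 + r) (s + n) = l - k - 1 := by
  rw [targetC, splitPos_copy hr, splitPos_iota, augSplitC_copy_last (natPerm_lt e hr)]

lemma targetC_copy_copy (hr : r < n) (hr' : r' < n) :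
    targetC s n k l CcN hN e (s + n + 1 + r) (s + n + 1 + r') =
      CcN (s + natPerm e r) (s + natPerm e r') + l := by
  have := natPerm_lt e hr
  have := natPerm_lt e hr'
  rw [targetC, splitPos_copy hr, splitPos_copy hr', augSplitC_of_lt (by omega) (by omega),
    splitCN_copy_copy]

lemma targetC_of_lt (hC : ∀ a b, CcN a b = CcN b a) {a b : ℕ} (ha : a < s + n)
    (hb : b < s + n) : targetC s n k l CcN hN e a b = CcN a b := by
  rcases node_cases (t := 0) (by omega : a < s + n + 1 + 0) with
    hu | ⟨i, hi, rfl⟩ | rfl | ⟨_, _, _⟩ <;>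
  rcases node_cases (t := 0) (by omega : b < s + n + 1 + 0) with
    hv | ⟨j, hj, rfl⟩ | rfl | ⟨_, _, _⟩ <;>
  try omega
  · exact targetC_spectator_spectator hu hv
  · exact targetC_spectator_node hu hj
  · rw [targetC_comm hC, targetC_spectator_node hv hi, hC]
  · exact targetC_node_node hi hj

variable {G : Type u} [CommGroup G] {q : G} {xcN : ℕ → G} {κ : G} {a : ℕ}

lemma targetX_of_lt (ha : a < s + n) : targetX q s n xcN κ e a = xcN a := by
  by_cases hs : a < s
  · simp [targetX, augSplitX, splitXN, splitPos_spectator hs, hs]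
    omega
  · obtain ⟨j, rfl⟩ : ∃ j, a = s + j := ⟨a - s, by omega⟩
    simp [targetX, augSplitX, splitXN, splitPos_node (e := e) (by omega : j < n)]
    omega

lemma targetX_iota : targetX q s n xcN κ e (s + n) = q * κ := by
  simp [targetX, augSplitX, splitPos_iota]

lemma targetX_copy (hr : r < n) :
    targetX q s n xcN κ e (s + n + 1 + r) = xcN (s + natPerm e r) * κ := by
  have := natPerm_lt e hr
  have hdiv : (2 * natPerm e r + 1) / 2 = natPerm e r := by omega
  rw [targetX, splitPos_copy hr]
  simp [augSplitX, splitXN, Nat.add_assoc, Nat.add_mod, hdiv]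
  omega

lemma targetX_unlink (hr : r < n) :
    q⁻¹ * targetX q s n xcN κ e (s + natPerm e r) * targetX q s n xcN κ e (s + n) =
      targetX q s n xcN κ e (s + n + 1 + r) := by
  rw [targetX_of_lt (by have := natPerm_lt e hr; omega), targetX_iota, targetX_copy hr,
    mul_comm q⁻¹, mul_assoc, inv_mul_cancel_left]

end Target

/-- The split node `a = s + j` is unlinked at step `σ j`; before that it is still joined to `ι`
by `k + 1` instead of `k`. -/
def Pending (s n : ℕ) (e : Equiv.Perm (Fin n)) (t a : ℕ) : Prop :=
  s ≤ a ∧ a < s + n ∧ t ≤ (natPerm e).symm (a - s)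

instance (s n : ℕ) (e : Equiv.Perm (Fin n)) (t : ℕ) : DecidablePred (Pending s n e t) :=
  fun _ => inferInstanceAs (Decidable (_ ∧ _ ∧ _))

def stageC (s n : ℕ) (k l : ℤ) (CcN : ℕ → ℕ → ℤ) (hN : ℕ → ℤ) (e : Equiv.Perm (Fin n))
    (t a b : ℕ) : ℤ :=
  targetC s n k l CcN hN e a b +
    if Pending s n e t a ∧ b = s + n ∨ a = s + n ∧ Pending s n e t b then 1 else 0

section Stage

variable {s n : ℕ} {k l : ℤ} {CcN : ℕ → ℕ → ℤ} {hN : ℕ → ℤ} {e : Equiv.Perm (Fin n)}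
  {t a b u j r : ℕ}

lemma pending_succ_iff :
    Pending s n e (t + 1) a ↔ Pending s n e t a ∧ a ≠ s + natPerm e t := by
  unfold Pending
  constructor
  · rintro ⟨hs, hn, hle⟩
    refine ⟨⟨hs, hn, by omega⟩, fun h => ?_⟩
    rw [h, Nat.add_sub_cancel_left, Equiv.symm_apply_apply] at hle
    omega
  · rintro ⟨⟨hs, hn, hle⟩, hne⟩
    refine ⟨hs, hn, lt_of_le_of_ne hle fun h => hne ?_⟩
    rw [h, Equiv.apply_symm_apply]
    omega

lemma stageC_comm (hC : ∀ a b, CcN a b = CcN b a) (a b : ℕ) :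
    stageC s n k l CcN hN e t a b = stageC s n k l CcN hN e t b a := by
  simp only [stageC, targetC_comm hC a b, or_comm, and_comm]

lemma stageC_of_ne (ha : a ≠ s + n) (hb : b ≠ s + n) :
    stageC s n k l CcN hN e t a b = targetC s n k l CcN hN e a b := by
  simp [stageC, ha, hb]

lemma stageC_of_lt_right (hb : s + n < b) :
    stageC s n k l CcN hN e t a b = targetC s n k l CcN hN e a b := by
  simp [stageC, Pending]
  omega

lemma stageC_of_le (hn : n ≤ t) (a b : ℕ) :
    stageC s n k l CcN hN e t a b = targetC s n k l CcN hN e a b := by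
  have (c : ℕ) : ¬Pending s n e t c := fun ⟨_, hc, hle⟩ =>
    absurd (natPerm_lt e.symm (show c - s < n by omega)) (by rw [← natPerm_symm]; omega)
  simp [stageC, this]

lemma stageC_spectator_iota (hu : u < s) : stageC s n k l CcN hN e t u (s + n) = hN u := by
  simp [stageC, Pending, targetC_spectator_iota hu, Nat.not_le.mpr hu]

lemma stageC_node_iota (hj : j < n) :
    stageC s n k l CcN hN e t (s + j) (s + n) =
      if t ≤ (natPerm e).symm j then k + 1 else k := by
  simp [stageC, Pending, targetC_node_iota hj, hj]
  split_ifs <;> ring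

lemma stageC_iota_iota : stageC s n k l CcN hN e t (s + n) (s + n) = l - 2 * k - 1 := by
  simp [stageC, Pending, targetC_iota_iota]

lemma stageC_copy_iota (hr : r < n) :
    stageC s n k l CcN hN e t (s + n + 1 + r) (s + n) = l - k - 1 := by
  simp [stageC, Pending, targetC_copy_iota hr]
  omega

lemma stageC_zero_iota (ha : a < s + n) :
    stageC s n k l CcN hN e 0 a (s + n) = if a < s then hN a else k + 1 := by
  split_ifs with hs
  · exact stageC_spectator_iota hs
  · obtain ⟨j, rfl⟩ : ∃ j, a = s + j := ⟨a - s, by omega⟩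
    simp [stageC_node_iota (show j < n by omega)]

lemma stageC_succ_of_not_unlinked
    (hab : ¬(a = s + natPerm e t ∧ b = s + n ∨ a = s + n ∧ b = s + natPerm e t)) :
    stageC s n k l CcN hN e (t + 1) a b = stageC s n k l CcN hN e t a b := by
  simp only [stageC, pending_succ_iff]
  congr 2
  apply propext
  tauto

lemma stageC_succ_unlinked (ht : t < n) :
    stageC s n k l CcN hN e (t + 1) (s + natPerm e t) (s + n) =
      stageC s n k l CcN hN e t (s + natPerm e t) (s + n) - 1 := by
  simp [stageC_node_iota (natPerm_lt e ht)]

lemma stageC_unlink_column (hC : ∀ a b, CcN a b = CcN b a) (ht : t < n)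
    (ha : a < s + n + 1 + t) :
    (let S := stageC s n k l CcN hN e t
     let i := s + natPerm e t
     if a = i then S i i + S i (s + n) - 1
     else if a = s + n then S (s + n) (s + n) + S i (s + n) - 1
     else S a i + S a (s + n)) =
    stageC s n k l CcN hN e (t + 1) a (s + n + 1 + t) := by
  have hi := natPerm_lt e ht
  have hiι : stageC s n k l CcN hN e t (s + natPerm e t) (s + n) = k + 1 := by
    simp [stageC_node_iota hi]
  rw [stageC_of_lt_right (by omega)]
  dsimp only
  rcases node_cases ha with hu | ⟨j, hj, rfl⟩ | rfl | ⟨r, hr, rfl⟩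
  · rw [if_neg (by omega), if_neg (by omega), stageC_of_ne (by omega) (by omega),
      targetC_spectator_node hu hi, stageC_spectator_iota hu, targetC_spectator_copy hu ht]
  · by_cases hj' : j = natPerm e t
    · subst hj'
      rw [if_pos rfl, hiι, stageC_of_ne (by omega) (by omega), targetC_node_node hi hi,
        targetC_node_copy hi ht, Equiv.symm_apply_apply, if_pos le_rfl]
      ring
    · have hσ : (natPerm e).symm j ≠ t := fun h => hj' (by rw [← h, Equiv.apply_symm_apply])
      rw [if_neg (by omega), if_neg (by omega), stageC_of_ne (by omega) (by omega),
        targetC_node_node hj hi, stageC_node_iota hj, targetC_node_copy hj ht]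
      split_ifs <;> omega
  · rw [if_neg (by omega), if_pos rfl, stageC_iota_iota, hiι, targetC_comm hC,
      targetC_copy_iota ht]
    ring
  · have hrt := hr.trans ht
    rw [if_neg (by omega), if_neg (by omega), stageC_of_ne (by omega) (by omega),
      targetC_comm hC, targetC_node_copy hi hrt, Equiv.symm_apply_apply, if_neg (by omega),
      stageC_copy_iota hrt, targetC_copy_copy hrt ht, hC]
    ring

lemma stageC_unlink_corner (ht : t < n) :
    (let S := stageC s n k l CcN hN e t
     let i := s + natPerm e t
     S i i + S (s + n) (s + n) + 2 * S i (s + n) - 1) =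
    stageC s n k l CcN hN e (t + 1) (s + n + 1 + t) (s + n + 1 + t) := by
  have hi := natPerm_lt e ht
  dsimp only
  rw [stageC_of_lt_right (b := s + n + 1 + t) (by omega), targetC_copy_copy ht ht,
    stageC_of_ne (by omega) (by omega), targetC_node_node hi hi, stageC_iota_iota,
    stageC_node_iota hi, Equiv.symm_apply_apply, if_pos le_rfl]
  ring

end Stage

/-- `Q` is the quiver pair reached after the first `t` unlinkings. -/
structure IsStage {G : Type u} [CommGroup G] (q : G) (s n : ℕ) (k l : ℤ) (CcN : ℕ → ℕ → ℤ)
    (hN : ℕ → ℤ) (xcN : ℕ → G) (κ : G) (e : Equiv.Perm (Fin n)) (t : ℕ) (Q : QP G) : Prop where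
  m_eq : Q.m = s + n + 1 + t
  Cn_eq : ∀ a b, a < Q.m → b < Q.m → Q.Cn a b = stageC s n k l CcN hN e t a b
  xn_eq : ∀ a, a < Q.m → Q.xn a = targetX q s n xcN κ e a

def unlinkings (s n : ℕ) (e : Equiv.Perm (Fin n)) (t : ℕ) : List (ℕ × ℕ) :=
  (List.range t).map fun r => (s + natPerm e r, s + n)

def augQuiver {G : Type u} [CommGroup G] (q : G) (s n : ℕ) (k l : ℤ)
    (Cc : Fin (s + n) → Fin (s + n) → ℤ) (xc : Fin (s + n) → G) (h : Fin s → ℤ) (κ : G) :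
    QP G :=
  ⟨s + n + 1,
    fun a b =>
      if (a : ℕ) < s + n then
        if (b : ℕ) < s + n then matN Cc (a : ℕ) (b : ℕ)
        else (if (a : ℕ) < s then intN h (a : ℕ) else k + 1)
      else
        if (b : ℕ) < s + n then (if (b : ℕ) < s then intN h (b : ℕ) else k + 1)
        else l - 2 * k - 1,
    fun a => if (a : ℕ) < s + n then grpN xc (a : ℕ) else q * κ⟩

lemma ofFn_eq_unlinkings (s n : ℕ) (e : Equiv.Perm (Fin n)) :
    List.ofFn (fun t : Fin n => (s + ((e t : Fin n) : ℕ), s + n)) = unlinkings s n e n := by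
  apply List.ext_getElem <;> simp only [unlinkings, List.length_ofFn, List.length_map,
    List.length_range, List.getElem_ofFn, List.getElem_map, List.getElem_range]
  intro r hr _
  rw [natPerm_of_lt e hr]

section Stage

variable {G : Type u} [CommGroup G] {q : G} {s n : ℕ} {k l : ℤ} {CcN : ℕ → ℕ → ℤ}
  {hN : ℕ → ℤ} {xcN : ℕ → G} {κ : G} {e : Equiv.Perm (Fin n)} {t : ℕ} {Q : QP G}

theorem IsStage.succ (hC : ∀ a b, CcN a b = CcN b a) (ht : t < n)
    (hQ : IsStage q s n k l CcN hN xcN κ e t Q) :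
    IsStage q s n k l CcN hN xcN κ e (t + 1) (unlinkStep q (s + natPerm e t) (s + n) Q) := by
  have hi := natPerm_lt e ht
  have him : s + natPerm e t < Q.m := by rw [hQ.m_eq]; omega
  have hιm : s + n < Q.m := by rw [hQ.m_eq]; omega
  have hv : s + natPerm e t < Q.m ∧ s + n < Q.m ∧ s + natPerm e t ≠ s + n :=
    ⟨him, hιm, by omega⟩
  have hm := unlinkStep_m q hv
  have hcol : ∀ a < Q.m, (unlinkStep q (s + natPerm e t) (s + n) Q).Cn a Q.m =
      stageC s n k l CcN hN e (t + 1) a Q.m := by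
    intro a ha
    rw [unlinkStep_Cn_new q hv ha, hQ.m_eq, ← stageC_unlink_column hC ht (hQ.m_eq ▸ ha)]
    simp only [hQ.Cn_eq _ _ him him, hQ.Cn_eq _ _ him hιm, hQ.Cn_eq _ _ hιm hιm,
      hQ.Cn_eq _ _ ha him, hQ.Cn_eq _ _ ha hιm]
  refine ⟨by rw [hm, hQ.m_eq]; omega, fun a b ha hb => ?_, fun a ha => ?_⟩
  · rw [hm] at ha hb
    rcases Nat.lt_succ_iff_lt_or_eq.mp ha with ha | rfl <;>
    rcases Nat.lt_succ_iff_lt_or_eq.mp hb with hb | rfl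
    · rw [unlinkStep_Cn_of_lt q hv ha hb, hQ.Cn_eq _ _ him hιm]
      split_ifs with hab
      · rcases hab with ⟨rfl, rfl⟩ | ⟨rfl, rfl⟩
        · exact (stageC_succ_unlinked ht).symm
        · rw [stageC_comm hC (s + n), stageC_succ_unlinked ht]
      · rw [hQ.Cn_eq _ _ ha hb, stageC_succ_of_not_unlinked hab]
    · exact hcol a ha
    · rw [unlinkStep_Cn_new_comm q hv hb, hcol b hb, stageC_comm hC]
    · rw [unlinkStep_Cn_new_new q hv, hQ.Cn_eq _ _ him him, hQ.Cn_eq _ _ hιm hιm,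
        hQ.Cn_eq _ _ him hιm, hQ.m_eq, ← stageC_unlink_corner ht]
  · rw [hm] at ha
    rcases Nat.lt_succ_iff_lt_or_eq.mp ha with ha | rfl
    · rw [unlinkStep_xn_of_lt q hv ha, hQ.xn_eq a ha]
    · rw [unlinkStep_xn_new q hv, hQ.xn_eq _ him, hQ.xn_eq _ hιm, hQ.m_eq, targetX_unlink ht]

lemma isStage_applySeq (hC : ∀ a b, CcN a b = CcN b a)
    (hQ : IsStage q s n k l CcN hN xcN κ e 0 Q) (ht : t ≤ n) :
    IsStage q s n k l CcN hN xcN κ e t (applySeq q (unlinkings s n e t) Q) := by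
  induction t with
  | zero => exact hQ
  | succ t ih =>
    rw [unlinkings, List.range_succ, List.map_append, List.map_singleton,
      applySeq_append_singleton]
    exact (ih (by omega)).succ hC (by omega)

lemma isStage_augQuiver (Cc : Fin (s + n) → Fin (s + n) → ℤ) (hCc : ∀ a b, Cc a b = Cc b a)
    (xc : Fin (s + n) → G) (h : Fin s → ℤ) :
    IsStage q s n k l (matN Cc) (intN h) (grpN xc) κ e 0 (augQuiver q s n k l Cc xc h κ) := by
  have hC := matN_comm hCc
  refine ⟨rfl, fun a b ha hb => ?_, fun a ha => ?_⟩
  · change a < s + n + 1 at ha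
    change b < s + n + 1 at hb
    simp only [augQuiver, QP.Cn, ha, hb, dite_true]
    by_cases ha' : a < s + n <;> by_cases hb' : b < s + n <;>
      simp only [ha', hb', if_true, if_false]
    · rw [stageC_of_ne (by omega) (by omega), targetC_of_lt hC ha' hb']
    · rw [show b = s + n by omega, stageC_zero_iota ha']
    · rw [show a = s + n by omega, stageC_comm hC, stageC_zero_iota hb']
    · rw [show a = s + n by omega, show b = s + n by omega, stageC_iota_iota]
  · change a < s + n + 1 at ha
    simp only [augQuiver, QP.xn, ha, dite_true]
    split_ifs with ha'
    · rw [targetX_of_lt ha']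
    · rw [show a = s + n by omega, targetX_iota]

end Stage

theorem splitting_by_unlinking_general {G : Type u} [CommGroup G] (q : G)
    (s n : ℕ) (k l : ℤ)
    (Cc : Fin (s + n) → Fin (s + n) → ℤ) (hCc : ∀ a b, Cc a b = Cc b a)
    (xc : Fin (s + n) → G) (h : Fin s → ℤ) (κ : G)
    (e : Equiv.Perm (Fin n)) :
    let σ : Equiv.Perm (Fin n) := e.symm
    let augC : Fin (s + n + 1) → Fin (s + n + 1) → ℤ := fun a b =>
      if (a : ℕ) < s + n then
        if (b : ℕ) < s + n then matN Cc (a : ℕ) (b : ℕ)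
        else (if (a : ℕ) < s then intN h (a : ℕ) else k + 1)
      else
        if (b : ℕ) < s + n then (if (b : ℕ) < s then intN h (b : ℕ) else k + 1)
        else l - 2 * k - 1
    let augX : Fin (s + n + 1) → G := fun a =>
      if (a : ℕ) < s + n then grpN xc (a : ℕ) else q * κ
    let D : QP G :=
      applySeq q (List.ofFn fun t : Fin n => (s + ((e t : Fin n) : ℕ), s + n))
        ⟨s + n + 1, augC, augX⟩
    let πN : ℕ → ℕ := fun a =>
      if a < s then a
      else if a < s + n then s + 2 * (a - s)
      else if a = s + n then s + 2 * n
      else if ht : a - (s + n + 1) < n then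
        s + 2 * ((e ⟨a - (s + n + 1), ht⟩ : Fin n) : ℕ) + 1
      else a
    let lastCol : ℕ → ℤ := fun a =>
      if a < s then intN h a else if (a - s) % 2 = 0 then k else l - k - 1
    let EN : ℕ → ℕ → ℤ := fun a b =>
      if a < s + 2 * n then
        if b < s + 2 * n then splitCN s n k l (matN Cc) (intN h) σ a b
        else lastCol a
      else if b < s + 2 * n then lastCol b
      else l - 2 * k - 1
    let zN : ℕ → G := fun a =>
      if a < s + 2 * n then splitXN s (grpN xc) κ a else q * κ
    D.m = s + 2 * n + 1 ∧
    (∀ a b, a < s + 2 * n + 1 → b < s + 2 * n + 1 → D.Cn a b = EN (πN a) (πN b)) ∧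
    (∀ a, a < s + 2 * n + 1 → D.xn a = zN (πN a)) := by
  intro σ augC augX D πN lastCol EN zN
  have hD : D = applySeq q (unlinkings s n e n) (augQuiver q s n k l Cc xc h κ) := by
    rw [← ofFn_eq_unlinkings]
    rfl
  obtain ⟨hm, hC, hx⟩ : IsStage q s n k l (matN Cc) (intN h) (grpN xc) κ e n D := by
    rw [hD]
    exact isStage_applySeq (matN_comm hCc) (isStage_augQuiver Cc hCc xc h) le_rfl
  refine ⟨by omega, fun a b ha hb => ?_, fun a ha => hx a (by omega)⟩
  rw [hC a b (by omega) (by omega), stageC_of_le le_rfl]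
  rfl

/-- **Splitting by unlinking** (Proposition 6.1).
Fix splitting data `Č, x̌, s, n, k, l, h, κ`. Extend `Č` by a last node `ι = s + n` with
entries `h u` toward spectators, `k + 1` toward split nodes and diagonal entry `l - 2k - 1`,
and extend `x̌` by `x̌(ι) = q·κ`. Fix an enumeration `e` of `Fin n` (so `σ := e⁻¹` satisfies
`σ (e t) = t`), and let `(D, y)` be obtained by applying the unlinkings
`U(s + e 0, ι), …, U(s + e (n-1), ι)` in this order. Let `π` keep nodes `0, …, s+n-1` at the
positions of the spectators and split nodes in the interleaved ordering of the split quiver,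
send the node created at step `t` to the position of the primed copy `(s + e t)'`, and send
`ι` to the last position. Then `(D, y)` coincides after relabeling by `π` with the
`(k,l)`-split quiver pair `(C_σ, x_σ)` augmented by a last node `ι` with entries `h u` toward
spectators, `k` toward split nodes, `l - k - 1` toward primed copies, diagonal `l - 2k - 1`,
and variable `q·κ`. -/
theorem splitting_by_unlinking {G : Type u} [CommGroup G] (q : G)
    (s n : ℕ) (hn : 1 ≤ n) (k l : ℤ)
    (Cc : Fin (s + n) → Fin (s + n) → ℤ) (hCc : ∀ a b, Cc a b = Cc b a)
    (xc : Fin (s + n) → G) (h : Fin s → ℤ) (κ : G)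
    (e : Equiv.Perm (Fin n)) :
    let σ : Equiv.Perm (Fin n) := e.symm
    let augC : Fin (s + n + 1) → Fin (s + n + 1) → ℤ := fun a b =>
      if (a : ℕ) < s + n then
        if (b : ℕ) < s + n then matN Cc (a : ℕ) (b : ℕ)
        else (if (a : ℕ) < s then intN h (a : ℕ) else k + 1)
      else
        if (b : ℕ) < s + n then (if (b : ℕ) < s then intN h (b : ℕ) else k + 1)
        else l - 2 * k - 1
    let augX : Fin (s + n + 1) → G := fun a =>
      if (a : ℕ) < s + n then grpN xc (a : ℕ) else q * κ
    let D : QP G :=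
      applySeq q (List.ofFn fun t : Fin n => (s + ((e t : Fin n) : ℕ), s + n))
        ⟨s + n + 1, augC, augX⟩
    let πN : ℕ → ℕ := fun a =>
      if a < s then a
      else if a < s + n then s + 2 * (a - s)
      else if a = s + n then s + 2 * n
      else if ht : a - (s + n + 1) < n then
        s + 2 * ((e ⟨a - (s + n + 1), ht⟩ : Fin n) : ℕ) + 1
      else a
    let lastCol : ℕ → ℤ := fun a =>
      if a < s then intN h a else if (a - s) % 2 = 0 then k else l - k - 1
    let EN : ℕ → ℕ → ℤ := fun a b =>
      if a < s + 2 * n then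
        if b < s + 2 * n then splitCN s n k l (matN Cc) (intN h) σ a b
        else lastCol a
      else if b < s + 2 * n then lastCol b
      else l - 2 * k - 1
    let zN : ℕ → G := fun a =>
      if a < s + 2 * n then splitXN s (grpN xc) κ a else q * κ
    D.m = s + 2 * n + 1 ∧
    (∀ a b, a < s + 2 * n + 1 → b < s + 2 * n + 1 → D.Cn a b = EN (πN a) (πN b)) ∧
    (∀ a, a < s + 2 * n + 1 → D.xn a = zN (πN a)) :=
  splitting_by_unlinking_general q s n k l Cc hCc xc h κ e

end QuiverUnlink
end
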